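/- arXiv:1811.01857 — 3 statements merged into one kernel-verified Lean document; each statement's English description precedes it below -/
import Mathlib

section
/- Let E and F be compact subsets of ℂ with E ⊆ F and ∂F ⊆ E. Then ∂(acc F) ⊆ acc E, where acc denotes the set of accumulation points and ∂ the topological boundary. -/
open Filter Topology Set

/-- Accumulation points of a set in ℂ. -/
def acc (S : Set ℂ) : Set ℂ := {z | AccPt z (𝓟 S)}
/-- Isolated points of a set in ℂ. -/
def iso (S : Set ℂ) : Set ℂ := {z | z ∈ S ∧ ¬ AccPt z (𝓟 S)}
/-- Polynomially convex hull: K together with the bounded connected components of ℂ \ K. -/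
def polyHull (K : Set ℂ) : Set ℂ :=
  K ∪ {z | z ∉ K ∧ Bornology.IsBounded (connectedComponentIn Kᶜ z)}

lemma accPt_of_nhds_subset {S U : Set ℂ} {w : ℂ} (h : U ∈ 𝓝 w) (hUS : U ⊆ S) :
    AccPt w (𝓟 S) := by
  have hS : S ∈ 𝓝[≠] w := mem_nhdsWithin_of_mem_nhds (mem_of_superset h hUS)
  have : 𝓝[≠] w ⊓ 𝓟 S = 𝓝[≠] w := inf_of_le_left (le_principal_iff.2 hS)
  rw [AccPt, this]
  infer_instance

lemma one_lt_rank_complex : 1 < Module.rank ℝ ℂ := by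
  rw [Complex.rank_real_complex]
  norm_num

/-- A punctured ball in `ℂ` is preconnected. -/
lemma isPreconnected_punctured_ball (z : ℂ) {r : ℝ} (hr : 0 < r) :
    IsPreconnected (Metric.ball z r \ {z}) := by
  set D := Metric.ball z r \ {z} with hD
  by_cases hne : D.Nonempty
  swap
  · rw [not_nonempty_iff_eq_empty] at hne
    rw [hne]; exact isPreconnected_empty
  set u : ℂ → ℂ := fun w => ‖w - z‖⁻¹ • (w - z) with hu
  have hunorm : ∀ w : ℂ, w ≠ z → ‖u w‖ = 1 := by
    intro w hw
    have h0 : ‖w - z‖ ≠ 0 := by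
      simpa [sub_eq_zero] using hw
    rw [hu]
    simp only []
    rw [norm_smul, Real.norm_eq_abs, abs_of_nonneg (inv_nonneg.2 (norm_nonneg _)),
      inv_mul_cancel₀ h0]
  set K : D → Set ℂ := fun w =>
    Metric.sphere z (r / 2) ∪ (fun t : ℝ => z + t • u w) '' Ioo (0 : ℝ) r with hK
  have hsphere_sub : Metric.sphere z (r / 2) ⊆ D := by
    intro y hy
    rw [Metric.mem_sphere] at hy
    constructor
    · rw [Metric.mem_ball, hy]; linarith
    · simp only [mem_singleton_iff]
      intro h
      rw [h, dist_self] at hy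
      linarith
  have hKsub : ∀ w : D, K w ⊆ D := by
    rintro w x (hx | ⟨t, ht, rfl⟩)
    · exact hsphere_sub hx
    · have hwz : (w : ℂ) ≠ z := w.2.2
      have hnorm : ‖t • u (w : ℂ)‖ = t := by
        rw [norm_smul, hunorm _ hwz, mul_one, Real.norm_eq_abs, abs_of_pos ht.1]
      constructor
      · rw [Metric.mem_ball, dist_eq_norm, add_sub_cancel_left, hnorm]
        exact ht.2
      · simp only [mem_singleton_iff]
        intro h
        have : t • u (w : ℂ) = 0 := by
          have := congrArg (· - z) h
          simpa [add_sub_cancel_left] using this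
        rw [this, norm_zero] at hnorm
        exact absurd hnorm.symm (ne_of_gt ht.1)
  have hDeq : D = ⋃ w : D, K w := by
    apply Subset.antisymm
    · intro x hx
      refine mem_iUnion.2 ⟨⟨x, hx⟩, Or.inr ⟨‖x - z‖, ?_, ?_⟩⟩
      · constructor
        · rw [norm_pos_iff, sub_ne_zero]; exact hx.2
        · rw [← dist_eq_norm]; exact hx.1
      · have h0 : ‖x - z‖ ≠ 0 := by
          rw [norm_ne_zero_iff, sub_ne_zero]; exact hx.2
        rw [hu]
        simp only
        rw [smul_smul, mul_inv_cancel₀ h0, one_smul, add_sub_cancel]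
    · exact iUnion_subset hKsub
  rw [hDeq]
  apply isPreconnected_iUnion
  · refine ⟨z + (r / 2 : ℝ), ?_⟩
    have : z + ((r / 2 : ℝ) : ℂ) ∈ Metric.sphere z (r / 2) := by
      simp [Complex.dist_eq, abs_of_pos hr]
    exact mem_iInter.2 fun w => Or.inl this
  · intro w
    have hs : IsPreconnected (Metric.sphere z (r / 2)) :=
      isPreconnected_sphere one_lt_rank_complex z (r / 2)
    have hline : IsPreconnected ((fun t : ℝ => z + t • u (w : ℂ)) '' Ioo (0 : ℝ) r) := by
      apply isPreconnected_Ioo.image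
      exact (continuous_const.add (continuous_id.smul continuous_const)).continuousOn
    have hwz : (w : ℂ) ≠ z := w.2.2
    have hpt : z + ((r / 2 : ℝ)) • u (w : ℂ) ∈ Metric.sphere z (r / 2) := by
      rw [Metric.mem_sphere, dist_eq_norm, add_sub_cancel_left, norm_smul, hunorm _ hwz,
        mul_one, Real.norm_eq_abs, abs_of_pos (by linarith : (0:ℝ) < r / 2)]
    have hpt2 : z + ((r / 2 : ℝ)) • u (w : ℂ) ∈
        (fun t : ℝ => z + t • u (w : ℂ)) '' Ioo (0 : ℝ) r :=
      ⟨r / 2, ⟨by linarith, by linarith⟩, rfl⟩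
    exact IsPreconnected.union _ hpt hpt2 hs hline

theorem frontier_acc_subset_acc (E F : Set ℂ) (hE : IsCompact E) (hF : IsCompact F)
    (hEF : E ⊆ F) (hbd : frontier F ⊆ E) : frontier (acc F) ⊆ acc E := by
  intro z hz
  have hclosed : IsClosed (acc F) := isClosed_derivedSet F
  have hzacc : AccPt z (𝓟 F) := by
    have : z ∈ closure (acc F) := hz.1
    rwa [hclosed.closure_eq] at this
  by_contra hne
  rw [acc, mem_setOf_eq, accPt_iff_nhds] at hne
  push_neg at hne
  obtain ⟨U, hU, hUE⟩ := hne
  obtain ⟨r, hr, hball⟩ := Metric.mem_nhds_iff.1 hU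
  set B := Metric.ball z r with hB
  -- the punctured ball misses the frontier of F
  have hBfr : (B \ {z}) ∩ frontier F = ∅ := by
    rw [eq_empty_iff_forall_notMem]
    rintro y ⟨⟨hyB, hyz⟩, hyfr⟩
    exact hyz (hUE y ⟨hball hyB, hbd hyfr⟩)
  -- the punctured ball sits inside interior F ∪ (closure F)ᶜ
  have hsub : B \ {z} ⊆ interior F ∪ (closure F)ᶜ := by
    intro w hw
    by_contra h
    simp only [mem_union, mem_compl_iff, not_or, not_not] at h
    have : w ∈ frontier F := ⟨h.2, h.1⟩
    exact (eq_empty_iff_forall_notMem.1 hBfr) w ⟨hw, this⟩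
  -- there is a point of F in the punctured ball
  obtain ⟨y, ⟨hyB, hyF⟩, hyz⟩ := accPt_iff_nhds.1 hzacc B (Metric.ball_mem_nhds z hr)
  have hyD : y ∈ B \ {z} := ⟨hyB, hyz⟩
  have hyint : y ∈ interior F := by
    rcases hsub hyD with h | h
    · exact h
    · exact absurd (subset_closure hyF) h
  -- by connectedness, the whole punctured ball is inside interior F
  have hconn := isPreconnected_punctured_ball z hr
  have hBint : B \ {z} ⊆ interior F := by
    apply hconn.subset_left_of_subset_union isOpen_interior
      isClosed_closure.isOpen_compl ?_ hsub ⟨y, hyD, hyint⟩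
    exact Disjoint.mono_left interior_subset_closure (disjoint_compl_right)
  -- hence the full ball consists of accumulation points of F
  have hball_acc : B ⊆ acc F := by
    intro w hw
    by_cases hwz : w = z
    · rw [hwz]; exact hzacc
    · have hwint : w ∈ interior F := hBint ⟨hw, hwz⟩
      exact accPt_of_nhds_subset (isOpen_interior.mem_nhds hwint) interior_subset
  have : z ∈ interior (acc F) :=
    mem_interior.2 ⟨B, hball_acc, Metric.isOpen_ball, Metric.mem_ball_self hr⟩
  exact hz.2 this
end

section
/- Let E and F be compact subsets of ℂ with E ⊆ F and with equal polynomially convex hulls η(E) = η(F). Then η(acc E) = η(acc F), where for a compact K ⊆ ℂ, η(K) denotes its polynomially convex hull (the union of K with the bounded connected components of ℂ \ K). -/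
open Filter Topology Set

open Metric Bornology

lemma subset_polyHull (K : Set ℂ) : K ⊆ polyHull K := subset_union_left

lemma mem_polyHull {K : Set ℂ} {z : ℂ} :
    z ∈ polyHull K ↔ z ∈ K ∨ (z ∉ K ∧ IsBounded (connectedComponentIn Kᶜ z)) := Iff.rfl

lemma polyHull_mono {K L : Set ℂ} (h : K ⊆ L) : polyHull K ⊆ polyHull L := by
  intro z hz
  rcases mem_polyHull.1 hz with hz | ⟨hzK, hb⟩
  · exact subset_polyHull L (h hz)
  · by_cases hzL : z ∈ L
    · exact subset_polyHull L hzL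
    · exact Or.inr ⟨hzL, hb.subset (connectedComponentIn_mono z (compl_subset_compl.2 h))⟩

lemma unbounded_comp_polyHull {L : Set ℂ} {z : ℂ} (hz : z ∉ polyHull L) :
    ¬ IsBounded (connectedComponentIn (polyHull L)ᶜ z) := by
  have hzL : z ∉ L := fun h => hz (subset_polyHull L h)
  have hW : ¬ IsBounded (connectedComponentIn Lᶜ z) := fun h => hz (Or.inr ⟨hzL, h⟩)
  intro hb
  apply hW
  apply hb.subset
  have hsub : connectedComponentIn Lᶜ z ⊆ (polyHull L)ᶜ := by
    intro w hw
    have hwL : w ∈ Lᶜ := connectedComponentIn_subset _ _ hw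
    have heq : connectedComponentIn Lᶜ w = connectedComponentIn Lᶜ z :=
      (connectedComponentIn_eq hw).symm
    intro hwh
    rcases mem_polyHull.1 hwh with h | ⟨-, hb'⟩
    · exact hwL h
    · exact hW (heq ▸ hb')
  exact isPreconnected_connectedComponentIn.subset_connectedComponentIn
    (mem_connectedComponentIn hzL) hsub

lemma polyHull_subset_of_subset_polyHull {K L : Set ℂ} (h : K ⊆ polyHull L) :
    polyHull K ⊆ polyHull L := by
  intro z hz
  by_contra hzL
  have hzK : z ∉ K := fun hk => hzL (h hk)
  have hb : IsBounded (connectedComponentIn Kᶜ z) :=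
    ((mem_polyHull.1 hz).resolve_left hzK).2
  exact unbounded_comp_polyHull hzL
    (hb.subset (connectedComponentIn_mono z (compl_subset_compl.2 h)))

lemma acc_mono {E F : Set ℂ} (h : E ⊆ F) : acc E ⊆ acc F :=
  fun _ hz => hz.mono (principal_mono.2 h)

lemma acc_subset {E : Set ℂ} (hE : IsClosed E) : acc E ⊆ E := by
  intro z hz
  have : ClusterPt z (𝓟 E) := AccPt.clusterPt hz
  have := mem_closure_iff_clusterPt.2 this
  rwa [hE.closure_eq] at this

lemma isClosed_acc (E : Set ℂ) : IsClosed (acc E) := by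
  rw [← isOpen_compl_iff, isOpen_iff_mem_nhds]
  intro z hz
  rw [mem_compl_iff, acc, mem_setOf_eq, accPt_iff_nhds] at hz
  push_neg at hz
  obtain ⟨U, hU, hUE⟩ := hz
  filter_upwards [interior_mem_nhds.2 hU] with w hw
  rw [mem_compl_iff, acc, mem_setOf_eq, accPt_iff_nhds]
  push_neg
  by_cases hwz : w = z
  · subst hwz
    exact ⟨U, hU, hUE⟩
  · refine ⟨interior U \ {z}, ?_, ?_⟩
    · exact (isOpen_interior.sdiff isClosed_singleton).mem_nhds ⟨hw, hwz⟩
    · intro y hy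
      exact absurd (hUE y ⟨interior_subset hy.1.1, hy.2⟩) hy.1.2

lemma countable_diff_acc (E : Set ℂ) : (E \ acc E).Countable := by
  classical
  obtain ⟨b, hbc, -, hb⟩ := TopologicalSpace.exists_countable_basis ℂ
  have key : ∀ z ∈ E \ acc E, ∃ B ∈ b, z ∈ B ∧ B ∩ E ⊆ {z} := by
    intro z hz
    have h2 := hz.2
    rw [acc, mem_setOf_eq, accPt_iff_nhds] at h2
    push_neg at h2
    obtain ⟨U, hU, hUE⟩ := h2
    obtain ⟨B, hBb, hzB, hBU⟩ := hb.mem_nhds_iff.1 hU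
    exact ⟨B, hBb, hzB, fun y hy => hUE y ⟨hBU hy.1, hy.2⟩⟩
  choose! f hfb hzf hfsub using key
  have hm : MapsTo f (E \ acc E) b := fun z hz => hfb z hz
  refine hm.countable_of_injOn ?_ hbc
  intro z hz z' hz' hff
  have : z' ∈ f z ∩ E := ⟨hff ▸ hzf z' hz', hz'.1⟩
  exact (hfsub z hz this).symm

lemma isPathConnected_ball_diff_countable {c : ℂ} {r : ℝ} (hr : 0 < r) {s : Set ℂ}
    (hs : s.Countable) : IsPathConnected (ball c r \ s) := by
  set e := OpenPartialHomeomorph.univBall (c : ℂ) r with he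
  have hcont : Continuous (e : ℂ → ℂ) := by
    rw [← continuousOn_univ]
    simpa [he, OpenPartialHomeomorph.univBall_source] using e.continuousOn
  have hinj : Function.Injective (e : ℂ → ℂ) := by
    have h := e.injOn
    rw [he, OpenPartialHomeomorph.univBall_source] at h
    exact injOn_univ.1 h
  have hrange : range (e : ℂ → ℂ) = ball c r := by
    rw [← image_univ, ← OpenPartialHomeomorph.univBall_source c r, e.image_source_eq_target, he,
      OpenPartialHomeomorph.univBall_target c hr]
  have ht : (e ⁻¹' s).Countable := hs.preimage hinj
  have hpc : IsPathConnected ((e ⁻¹' s)ᶜ) :=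
    ht.isPathConnected_compl_of_one_lt_rank (by rw [Complex.rank_real_complex]; norm_num)
  have himg : (e : ℂ → ℂ) '' (e ⁻¹' s)ᶜ = ball c r \ s := by
    rw [compl_eq_univ_diff, image_diff hinj, image_univ, hrange,
      image_preimage_eq_inter_range, hrange, diff_inter_self_eq_diff]
  rw [← himg]
  exact hpc.image hcont

lemma isPreconnected_open_diff_countable {U s : Set ℂ} (hU : IsOpen U)
    (hUc : IsPreconnected U) (hs : s.Countable) : IsPreconnected (U \ s) := by
  rcases eq_empty_or_nonempty (U \ s) with h | ⟨x, hx⟩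
  · rw [h]; exact isPreconnected_empty
  have hdense : Dense sᶜ := hs.dense_compl ℝ
  -- joinedIn inside a ball minus s
  have ballJoin : ∀ (u : ℂ) (r : ℝ), 0 < r → ball u r ⊆ U →
      ∀ v ∈ ball u r \ s, ∀ w ∈ ball u r \ s, JoinedIn (U \ s) v w := by
    intro u r hr hbU v hv w hw
    exact ((isPathConnected_ball_diff_countable hr hs).joinedIn v hv w hw).mono
      (diff_subset_diff_left hbU)
  set T : Set ℂ :=
    {u | u ∈ U ∧ ∃ r > 0, ball u r ⊆ U ∧ ∃ v ∈ ball u r \ s, JoinedIn (U \ s) x v} with hT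
  have hTopen : IsOpen T := by
    rw [Metric.isOpen_iff]
    rintro u ⟨huU, r, hr, hbU, v, hv, hjoin⟩
    refine ⟨r, hr, ?_⟩
    intro u' hu'
    have hr' : 0 < r - dist u' u := by
      rw [mem_ball] at hu'; linarith
    have hsub : ball u' (r - dist u' u) ⊆ ball u r := by
      intro y hy
      rw [mem_ball] at hy ⊢
      calc dist y u ≤ dist y u' + dist u' u := dist_triangle _ _ _
        _ < r := by linarith
    obtain ⟨w, hws, hwmem⟩ := hdense.exists_mem_open isOpen_ball
      ⟨u', mem_ball_self hr'⟩
    refine ⟨hbU (hsub hwmem)  |> fun _ => hbU hu', (r - dist u' u), hr',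
      hsub.trans hbU, w, ⟨hwmem, hws⟩, ?_⟩
    exact hjoin.trans (ballJoin u r hr hbU v hv w ⟨hsub hwmem, hws⟩)
  have hTclosed : U ∩ closure T ⊆ T := by
    rintro u ⟨huU, hucl⟩
    obtain ⟨r, hr, hbU⟩ := Metric.isOpen_iff.1 hU u huU
    obtain ⟨t, htT, htu⟩ := Metric.mem_closure_iff.1 hucl r hr
    obtain ⟨htU, rt, hrt, hbt, v, hv, hjv⟩ := htT
    have htball : t ∈ ball u r := by rwa [mem_ball, dist_comm]
    obtain ⟨w, hws, hwmem⟩ := hdense.exists_mem_open (isOpen_ball.inter isOpen_ball)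
      ⟨t, htball, mem_ball_self hrt⟩
    refine ⟨huU, r, hr, hbU, w, ⟨hwmem.1, hws⟩, ?_⟩
    exact hjv.trans (ballJoin t rt hrt hbt v hv w ⟨hwmem.2, hws⟩)
  have hxT : x ∈ T := by
    obtain ⟨r, hr, hbU⟩ := Metric.isOpen_iff.1 hU x hx.1
    exact ⟨hx.1, r, hr, hbU, x, ⟨mem_ball_self hr, hx.2⟩, JoinedIn.refl hx⟩
  have hUT : U ⊆ T := by
    by_contra hcon
    have hsplit : U ⊆ T ∪ (closure T)ᶜ := by
      intro z hz
      by_cases hzc : z ∈ closure T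
      · exact Or.inl (hTclosed ⟨hz, hzc⟩)
      · exact Or.inr hzc
    have h1 : (U ∩ T).Nonempty := ⟨x, hx.1, hxT⟩
    have h2 : (U ∩ (closure T)ᶜ).Nonempty := by
      rw [not_subset] at hcon
      obtain ⟨z, hzU, hzT⟩ := hcon
      refine ⟨z, hzU, fun hzc => hzT (hTclosed ⟨hzU, hzc⟩)⟩
    obtain ⟨z, -, hz1, hz2⟩ := hUc T (closure T)ᶜ hTopen isClosed_closure.isOpen_compl
      hsplit h1 h2
    exact hz2 (subset_closure hz1)
  refine (IsPathConnected.isConnected ?_).isPreconnected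
  refine ⟨x, hx, ?_⟩
  rintro y ⟨hyU, hys⟩
  obtain ⟨-, r, hr, hbU, v, hv, hjv⟩ := hUT hyU
  exact hjv.trans (ballJoin y r hr hbU v hv y ⟨mem_ball_self hr, hys⟩)

lemma polyHull_subset_union (E : Set ℂ) (hE : IsCompact E) :
    polyHull E ⊆ E ∪ polyHull (acc E) := by
  intro z hz
  by_cases hzE : z ∈ E
  · exact Or.inl hzE
  right
  have hb : IsBounded (connectedComponentIn Eᶜ z) :=
    ((mem_polyHull.1 hz).resolve_left hzE).2
  by_contra hzh
  have hzacc : z ∉ acc E := fun h => hzh (subset_polyHull _ h)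
  have hW : ¬ IsBounded (connectedComponentIn (acc E)ᶜ z) := fun h => hzh (Or.inr ⟨hzacc, h⟩)
  set W := connectedComponentIn (acc E)ᶜ z with hWdef
  have hWopen : IsOpen W := (isClosed_acc E).isOpen_compl.connectedComponentIn
  have hWE : (W ∩ E).Countable := (countable_diff_acc E).mono (by
    intro w hw
    exact ⟨hw.2, fun hacc => (connectedComponentIn_subset _ _ hw.1) hacc⟩)
  have hpre : IsPreconnected (W \ (W ∩ E)) :=
    isPreconnected_open_diff_countable hWopen isPreconnected_connectedComponentIn hWE
  rw [diff_self_inter] at hpre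
  have hzW : z ∈ W := mem_connectedComponentIn hzacc
  have hsub : W \ E ⊆ connectedComponentIn Eᶜ z :=
    hpre.subset_connectedComponentIn ⟨hzW, hzE⟩ (fun w hw => hw.2)
  apply hW
  have : W ⊆ (W \ E) ∪ E := by
    intro w hw
    by_cases hwE : w ∈ E
    · exact Or.inr hwE
    · exact Or.inl ⟨hw, hwE⟩
  exact ((hb.subset hsub |>.union hE.isBounded).subset this)

theorem polyHull_acc_eq (E F : Set ℂ) (hE : IsCompact E) (hF : IsCompact F)
    (hEF : E ⊆ F) (hη : polyHull E = polyHull F) : polyHull (acc E) = polyHull (acc F) := by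
  have h1 : polyHull (acc E) ⊆ polyHull (acc F) := polyHull_mono (acc_mono hEF)
  have hkey : acc F ⊆ polyHull (acc E) := by
    intro z hz
    have hzF : z ∈ F := acc_subset hF.isClosed hz
    have hzhE : z ∈ polyHull E := by rw [hη]; exact subset_polyHull F hzF
    rcases polyHull_subset_union E hE hzhE with hzE | h
    · -- z ∈ E case
      by_contra hzh
      have hzacc : z ∉ acc E := fun h => hzh (subset_polyHull _ h)
      have hWunb : ¬ IsBounded (connectedComponentIn (acc E)ᶜ z) :=
        fun h => hzh (Or.inr ⟨hzacc, h⟩)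
      have hzacc' := hzacc
      rw [acc, mem_setOf_eq, accPt_iff_nhds] at hzacc'
      push_neg at hzacc'
      obtain ⟨U, hU, hUE⟩ := hzacc'
      obtain ⟨r, hr, hball⟩ := Metric.mem_nhds_iff.1 hU
      have hz' := hz
      rw [acc, mem_setOf_eq, accPt_iff_nhds] at hz'
      obtain ⟨w, ⟨hwball, hwF⟩, hwz⟩ := hz' (ball z r) (ball_mem_nhds z hr)
      have hwE : w ∉ E := fun h => hwz (hUE w ⟨hball hwball, h⟩)
      have hwhull : w ∈ polyHull (acc E) := by
        have hw1 : w ∈ polyHull E := by rw [hη]; exact subset_polyHull F hwF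
        rcases polyHull_subset_union E hE hw1 with h | h
        · exact absurd h hwE
        · exact h
      have hballacc : ball z r ⊆ (acc E)ᶜ := by
        intro y hy hyacc
        have hyE : y ∈ E := acc_subset hE.isClosed hyacc
        have hyz : y = z := hUE y ⟨hball hy, hyE⟩
        exact hzacc (hyz ▸ hyacc)
      have hwacc : w ∉ acc E := fun h => hballacc hwball h
      have hwcomp : connectedComponentIn (acc E)ᶜ w = connectedComponentIn (acc E)ᶜ z := by
        exact (connectedComponentIn_eq ((convex_ball z r).isPreconnected.subset_connectedComponentIn
          (mem_ball_self hr) hballacc hwball)).symm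
      rcases mem_polyHull.1 hwhull with h | ⟨-, hbw⟩
      · exact hwacc h
      · exact hWunb (hwcomp ▸ hbw)
    · exact h
  exact Subset.antisymm h1 (polyHull_subset_of_subset_polyHull hkey)
end

section
/- If T ∈ B(X) is polynomially Riesz, i.e., there is a nonzero complex polynomial P with P(T) Riesz, then σ_b(T) is a finite set and hence acc σ_b(T) = ∅. -/
open Filter Topology Set

noncomputable section

variable {X Y : Type*} [NormedAddCommGroup X] [NormedSpace ℂ X] [CompleteSpace X]
  [NormedAddCommGroup Y] [NormedSpace ℂ Y] [CompleteSpace Y]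

/-- A bounded operator is Browder if it is Fredholm (finite-dimensional kernel and
finite-codimensional range) with finite ascent and finite descent. -/
def IsBrowder {Z : Type*} [NormedAddCommGroup Z] [NormedSpace ℂ Z] [CompleteSpace Z]
    (T : Z →L[ℂ] Z) : Prop :=
  FiniteDimensional ℂ (LinearMap.ker (T : Z →ₗ[ℂ] Z)) ∧ FiniteDimensional ℂ (Z ⧸ LinearMap.range (T : Z →ₗ[ℂ] Z)) ∧
  (∃ n : ℕ, LinearMap.ker ((T ^ (n + 1) : Z →L[ℂ] Z) : Z →ₗ[ℂ] Z) =
    LinearMap.ker ((T ^ n : Z →L[ℂ] Z) : Z →ₗ[ℂ] Z)) ∧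
  (∃ n : ℕ, LinearMap.range ((T ^ (n + 1) : Z →L[ℂ] Z) : Z →ₗ[ℂ] Z) =
    LinearMap.range ((T ^ n : Z →L[ℂ] Z) : Z →ₗ[ℂ] Z))

/-- The Browder spectrum. -/
def sigmaB {Z : Type*} [NormedAddCommGroup Z] [NormedSpace ℂ Z] [CompleteSpace Z]
    (T : Z →L[ℂ] Z) : Set ℂ :=
  {l | ¬ IsBrowder (T - l • (1 : Z →L[ℂ] Z))}

/-- The upper triangular operator matrix `M_C (x, y) = (A x + C y, B y)` on `X ⊕ Y`. -/
def MC (A : X →L[ℂ] X) (B : Y →L[ℂ] Y) (C : Y →L[ℂ] X) : X × Y →L[ℂ] X × Y :=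
  (A.comp (ContinuousLinearMap.fst ℂ X Y) + C.comp (ContinuousLinearMap.snd ℂ X Y)).prod
    (B.comp (ContinuousLinearMap.snd ℂ X Y))

/-- A Riesz operator: one whose Browder spectrum is `{0}`. -/
def IsRiesz {Z : Type*} [NormedAddCommGroup Z] [NormedSpace ℂ Z] [CompleteSpace Z]
    (T : Z →L[ℂ] Z) : Prop :=
  sigmaB T = {0}


section PolyRieszHelpers

set_option linter.unusedSectionVars false

variable {Z : Type*} [NormedAddCommGroup Z] [NormedSpace ℂ Z] [CompleteSpace Z]

private lemma fd_of_ker_range {V W : Type*} [AddCommGroup V] [Module ℂ V]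
    [AddCommGroup W] [Module ℂ W] (f : V →ₗ[ℂ] W)
    (hk : FiniteDimensional ℂ (LinearMap.ker f))
    (hr : FiniteDimensional ℂ (LinearMap.range f)) :
    FiniteDimensional ℂ V := by
  haveI : IsNoetherian ℂ (LinearMap.ker f) := IsNoetherian.iff_fg.mpr hk
  haveI : IsNoetherian ℂ (LinearMap.range f) := IsNoetherian.iff_fg.mpr hr
  haveI : IsNoetherian ℂ V :=
    isNoetherian_of_range_eq_ker (LinearMap.ker f).subtype f.rangeRestrict
      (by rw [Submodule.range_subtype, LinearMap.ker_rangeRestrict])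
  exact IsNoetherian.iff_fg.mp ‹_›

private lemma range_mul' (f g : Z →L[ℂ] Z) :
    LinearMap.range ((f * g : Z →L[ℂ] Z) : Z →ₗ[ℂ] Z) = Submodule.map (f : Z →ₗ[ℂ] Z) (LinearMap.range ((g : Z →L[ℂ] Z) : Z →ₗ[ℂ] Z)) := by
  ext x
  simp only [LinearMap.mem_range, Submodule.mem_map, ContinuousLinearMap.mul_apply,
    ContinuousLinearMap.coe_coe]
  constructor
  · rintro ⟨y, rfl⟩; exact ⟨g y, ⟨y, rfl⟩, rfl⟩
  · rintro ⟨y, ⟨z, rfl⟩, rfl⟩; exact ⟨z, rfl⟩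

private lemma ker_pow_mono (f : Z →L[ℂ] Z) {j k : ℕ} (hjk : j ≤ k) :
    LinearMap.ker ((f ^ j : Z →L[ℂ] Z) : Z →ₗ[ℂ] Z) ≤ LinearMap.ker ((f ^ k : Z →L[ℂ] Z) : Z →ₗ[ℂ] Z) := by
  obtain ⟨i, rfl⟩ := Nat.exists_eq_add_of_le hjk
  intro x hx
  rw [LinearMap.mem_ker] at hx ⊢
  rw [ContinuousLinearMap.coe_coe] at hx ⊢
  rw [add_comm, pow_add, ContinuousLinearMap.mul_apply, hx, map_zero]

private lemma range_pow_anti (f : Z →L[ℂ] Z) {j k : ℕ} (hjk : j ≤ k) :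
    LinearMap.range ((f ^ k : Z →L[ℂ] Z) : Z →ₗ[ℂ] Z) ≤ LinearMap.range ((f ^ j : Z →L[ℂ] Z) : Z →ₗ[ℂ] Z) := by
  obtain ⟨i, rfl⟩ := Nat.exists_eq_add_of_le hjk
  rintro x ⟨y, rfl⟩
  exact ⟨(f ^ i) y, by rw [pow_add]; simp only [ContinuousLinearMap.coe_coe, ContinuousLinearMap.mul_apply]⟩

private lemma nat_mono_bdd (u : ℕ → ℕ) (hm : ∀ n, u n ≤ u (n + 1)) (B : ℕ)
    (hb : ∀ n, u n ≤ B) : ∃ n, u (n + 1) = u n := by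
  by_contra hc
  push_neg at hc
  have hs : StrictMono u :=
    strictMono_nat_of_lt_succ fun n => lt_of_le_of_ne (hm n) fun e => hc n e.symm
  have h1 : B + 1 ≤ u (B + 1) := hs.le_apply
  have h2 := hb (B + 1)
  omega

private lemma nat_anti_bdd (u : ℕ → ℕ) (hm : ∀ n, u (n + 1) ≤ u n) :
    ∃ n, u (n + 1) = u n := by
  by_contra hc
  push_neg at hc
  have key : ∀ n, u n + n ≤ u 0 := by
    intro n
    induction n with
    | zero => simp
    | succ n ih =>
      have h1 : u (n + 1) < u n := lt_of_le_of_ne (hm n) (hc n)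
      omega
  have := key (u 0 + 1)
  omega

private lemma browder_of_comm_factor (A S : Z →L[ℂ] Z) (hc : A * S = S * A)
    (hD : IsBrowder (A * S)) : IsBrowder A := by
  set D := A * S with hDdef
  have hc' : A * S = S * A := hc
  have hcomm : Commute A S := hc'
  have hDpow : ∀ k : ℕ, D ^ k = A ^ k * S ^ k := by
    intro k
    rw [hDdef]
    exact hcomm.mul_pow k
  have hDpow' : ∀ k : ℕ, D ^ k = S ^ k * A ^ k := by
    intro k
    rw [hDdef, hc']
    exact hcomm.symm.mul_pow k
  -- kernels of powers of D are finite dimensional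
  have hkfd : ∀ k : ℕ, FiniteDimensional ℂ (LinearMap.ker ((D ^ k : Z →L[ℂ] Z) : Z →ₗ[ℂ] Z)) := by
    intro k
    induction k with
    | zero =>
      have : LinearMap.ker (((D : Z →L[ℂ] Z) ^ 0 : Z →L[ℂ] Z) : Z →ₗ[ℂ] Z) = ⊥ := by
        rw [pow_zero]
        ext x
        simp [ContinuousLinearMap.one_apply]
      rw [this]
      infer_instance
    | succ k ih =>
      set f : (LinearMap.ker ((D ^ (k + 1) : Z →L[ℂ] Z) : Z →ₗ[ℂ] Z) : Submodule ℂ Z) →ₗ[ℂ] Z :=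
        (D : Z →ₗ[ℂ] Z).domRestrict (LinearMap.ker ((D ^ (k + 1) : Z →L[ℂ] Z) : Z →ₗ[ℂ] Z)) with hf
      apply fd_of_ker_range f
      · -- kernel of f embeds in ker D
        have hmem : ∀ c : LinearMap.ker f, ((c : (LinearMap.ker ((D ^ (k + 1) : Z →L[ℂ] Z) : Z →ₗ[ℂ] Z) : Submodule ℂ Z)) : Z) ∈ LinearMap.ker ((D : Z →L[ℂ] Z) : Z →ₗ[ℂ] Z) := by
          rintro ⟨c, hcm⟩
          rw [LinearMap.mem_ker] at hcm ⊢
          exact hcm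
        let g : LinearMap.ker f →ₗ[ℂ] LinearMap.ker ((D : Z →L[ℂ] Z) : Z →ₗ[ℂ] Z) :=
          LinearMap.codRestrict (LinearMap.ker ((D : Z →L[ℂ] Z) : Z →ₗ[ℂ] Z))
            (((LinearMap.ker ((D ^ (k + 1) : Z →L[ℂ] Z) : Z →ₗ[ℂ] Z)).subtype).comp (LinearMap.ker f).subtype) hmem
        have hg : Function.Injective g := by
          intro a b hab
          have h1 : ((a : (LinearMap.ker ((D ^ (k + 1) : Z →L[ℂ] Z) : Z →ₗ[ℂ] Z) : Submodule ℂ Z)) : Z)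
              = ((b : (LinearMap.ker ((D ^ (k + 1) : Z →L[ℂ] Z) : Z →ₗ[ℂ] Z) : Submodule ℂ Z)) : Z) := by
            have h2 := congrArg (fun t : LinearMap.ker ((D : Z →L[ℂ] Z) : Z →ₗ[ℂ] Z) => (t : Z)) hab
            exact h2
          exact Subtype.ext (Subtype.ext h1)
        haveI := hD.1
        exact FiniteDimensional.of_injective g hg
      · -- range of f is inside ker (D ^ k)
        have hle : LinearMap.range f ≤ LinearMap.ker ((D ^ k : Z →L[ℂ] Z) : Z →ₗ[ℂ] Z) := by
          rintro x ⟨⟨y, hy⟩, rfl⟩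
          rw [LinearMap.mem_ker] at hy ⊢
          show (D ^ k) ((f ⟨y, _⟩ : Z)) = 0
          rw [hf, LinearMap.domRestrict_apply, ContinuousLinearMap.coe_coe,
            ← ContinuousLinearMap.mul_apply, ← pow_succ]
          exact hy
        haveI := ih
        exact Submodule.finiteDimensional_of_le hle
  -- ascent part
  obtain ⟨p, hp⟩ := hD.2.2.1
  have hkstab : ∀ k : ℕ, LinearMap.ker ((D ^ (p + k) : Z →L[ℂ] Z) : Z →ₗ[ℂ] Z) = LinearMap.ker ((D ^ p : Z →L[ℂ] Z) : Z →ₗ[ℂ] Z) := by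
    intro k
    induction k with
    | zero => rw [Nat.add_zero]
    | succ k ih =>
      refine le_antisymm ?_ (ih ▸ ker_pow_mono D (by omega))
      intro x hx
      rw [← ih]
      rw [LinearMap.mem_ker] at hx ⊢
      have h1 : (D ^ (p + 1)) ((D ^ k) x) = 0 := by
        rw [← ContinuousLinearMap.mul_apply, ← pow_add]
        rw [show p + 1 + k = p + (k + 1) by omega]
        exact hx
      have h2 : (D ^ k) x ∈ LinearMap.ker ((D ^ p : Z →L[ℂ] Z) : Z →ₗ[ℂ] Z) := by
        rw [← hp]; exact h1
      rw [LinearMap.mem_ker] at h2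
      rw [pow_add, ContinuousLinearMap.coe_coe, ContinuousLinearMap.mul_apply]
      exact h2
  have hAkerle : ∀ k : ℕ, LinearMap.ker ((A ^ k : Z →L[ℂ] Z) : Z →ₗ[ℂ] Z) ≤ LinearMap.ker ((D ^ p : Z →L[ℂ] Z) : Z →ₗ[ℂ] Z) := by
    intro k
    have h1 : LinearMap.ker ((A ^ k : Z →L[ℂ] Z) : Z →ₗ[ℂ] Z) ≤ LinearMap.ker ((D ^ k : Z →L[ℂ] Z) : Z →ₗ[ℂ] Z) := by
      intro x hx
      rw [LinearMap.mem_ker] at hx ⊢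
      rw [ContinuousLinearMap.coe_coe] at hx
      rw [hDpow' k, ContinuousLinearMap.coe_coe, ContinuousLinearMap.mul_apply, hx, map_zero]
    exact h1.trans ((ker_pow_mono D (Nat.le_add_left k p)).trans (hkstab k).le)
  haveI hKfd := hkfd p
  haveI hAfd : ∀ k : ℕ, FiniteDimensional ℂ (LinearMap.ker ((A ^ k : Z →L[ℂ] Z) : Z →ₗ[ℂ] Z)) := fun k =>
    Submodule.finiteDimensional_of_le (hAkerle k)
  have hascent : ∃ n : ℕ, LinearMap.ker ((A ^ (n + 1) : Z →L[ℂ] Z) : Z →ₗ[ℂ] Z) = LinearMap.ker ((A ^ n : Z →L[ℂ] Z) : Z →ₗ[ℂ] Z) := by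
    obtain ⟨n, hn⟩ := nat_mono_bdd (fun k => Module.finrank ℂ (LinearMap.ker ((A ^ k : Z →L[ℂ] Z) : Z →ₗ[ℂ] Z)))
      (fun n => Submodule.finrank_mono (ker_pow_mono A (Nat.le_succ n)))
      (Module.finrank ℂ (LinearMap.ker ((D ^ p : Z →L[ℂ] Z) : Z →ₗ[ℂ] Z)))
      (fun n => Submodule.finrank_mono (hAkerle n))
    exact ⟨n, (Submodule.eq_of_le_of_finrank_le (ker_pow_mono A (Nat.le_succ n)) hn.le).symm⟩
  -- descent part
  obtain ⟨q, hq⟩ := hD.2.2.2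
  have hrmul : ∀ k : ℕ, LinearMap.range ((D ^ (k + 1) : Z →L[ℂ] Z) : Z →ₗ[ℂ] Z) =
      Submodule.map (D : Z →ₗ[ℂ] Z) (LinearMap.range ((D ^ k : Z →L[ℂ] Z) : Z →ₗ[ℂ] Z)) := by
    intro k
    rw [pow_succ', range_mul']
  have hrstab : ∀ k : ℕ, LinearMap.range ((D ^ (q + k) : Z →L[ℂ] Z) : Z →ₗ[ℂ] Z) = LinearMap.range ((D ^ q : Z →L[ℂ] Z) : Z →ₗ[ℂ] Z) := by
    intro k
    induction k with
    | zero => rw [Nat.add_zero]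
    | succ k ih =>
      rw [show q + (k + 1) = (q + k) + 1 from rfl, hrmul, ih, ← hrmul, hq]
  have hqfd : ∀ k : ℕ, FiniteDimensional ℂ (Z ⧸ LinearMap.range ((D ^ (k + 1) : Z →L[ℂ] Z) : Z →ₗ[ℂ] Z)) := by
    intro k
    induction k with
    | zero =>
      have : LinearMap.range (((D : Z →L[ℂ] Z) ^ 1 : Z →L[ℂ] Z) : Z →ₗ[ℂ] Z) = LinearMap.range ((D : Z →L[ℂ] Z) : Z →ₗ[ℂ] Z) := by rw [pow_one]
      rw [this]
      exact hD.2.1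
    | succ k ih =>
      have hle : LinearMap.range ((D ^ (k + 2) : Z →L[ℂ] Z) : Z →ₗ[ℂ] Z) ≤ LinearMap.range ((D ^ (k + 1) : Z →L[ℂ] Z) : Z →ₗ[ℂ] Z) :=
        range_pow_anti D (by omega)
      let π : (Z ⧸ LinearMap.range ((D ^ (k + 2) : Z →L[ℂ] Z) : Z →ₗ[ℂ] Z)) →ₗ[ℂ] (Z ⧸ LinearMap.range ((D ^ (k + 1) : Z →L[ℂ] Z) : Z →ₗ[ℂ] Z)) :=
        Submodule.mapQ _ _ LinearMap.id (by simpa using hle)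
      apply fd_of_ker_range π
      · -- ker π f.d.
        haveI : FiniteDimensional ℂ (Z ⧸ LinearMap.range ((D : Z →L[ℂ] Z) : Z →ₗ[ℂ] Z)) := hD.2.1
        let d : (Z ⧸ LinearMap.range ((D : Z →L[ℂ] Z) : Z →ₗ[ℂ] Z)) →ₗ[ℂ] (Z ⧸ LinearMap.range ((D ^ (k + 2) : Z →L[ℂ] Z) : Z →ₗ[ℂ] Z)) :=
          Submodule.mapQ _ _ ((D ^ (k + 1) : Z →L[ℂ] Z) : Z →ₗ[ℂ] Z) (by
            rintro x ⟨y, rfl⟩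
            simp only [Submodule.mem_comap, ContinuousLinearMap.coe_coe]
            exact ⟨y, by rw [show k + 2 = (k + 1) + 1 from rfl, pow_succ]; rfl⟩)
        have hker : LinearMap.ker π ≤ LinearMap.range d := by
          intro w hw
          obtain ⟨x, rfl⟩ := Submodule.Quotient.mk_surjective _ w
          rw [LinearMap.mem_ker, Submodule.mapQ_apply, LinearMap.id_apply,
            Submodule.Quotient.mk_eq_zero] at hw
          obtain ⟨y, hy⟩ := hw
          exact ⟨Submodule.Quotient.mk y, by rw [Submodule.mapQ_apply]; exact congrArg _ hy⟩
        exact Submodule.finiteDimensional_of_le hker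
      · -- range π f.d. (submodule of f.d. quotient)
        haveI := ih
        infer_instance
  haveI hMfd : FiniteDimensional ℂ (Z ⧸ LinearMap.range ((D ^ q : Z →L[ℂ] Z) : Z →ₗ[ℂ] Z)) := by
    rw [← hq]; exact hqfd q
  set M := LinearMap.range ((D ^ q : Z →L[ℂ] Z) : Z →ₗ[ℂ] Z) with hM
  have hMle : ∀ k : ℕ, M ≤ LinearMap.range ((A ^ k : Z →L[ℂ] Z) : Z →ₗ[ℂ] Z) := by
    intro k
    have h1 : M = LinearMap.range ((D ^ (q + k) : Z →L[ℂ] Z) : Z →ₗ[ℂ] Z) := (hrstab k).symm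
    have h2 : LinearMap.range ((D ^ (q + k) : Z →L[ℂ] Z) : Z →ₗ[ℂ] Z) ≤ LinearMap.range ((D ^ k : Z →L[ℂ] Z) : Z →ₗ[ℂ] Z) :=
      range_pow_anti D (Nat.le_add_left k q)
    have h3 : LinearMap.range ((D ^ k : Z →L[ℂ] Z) : Z →ₗ[ℂ] Z) ≤ LinearMap.range ((A ^ k : Z →L[ℂ] Z) : Z →ₗ[ℂ] Z) := by
      rintro x ⟨y, rfl⟩
      rw [hDpow k]
      exact ⟨(S ^ k) y, by simp only [ContinuousLinearMap.coe_coe, ContinuousLinearMap.mul_apply]⟩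
    exact h1 ▸ (h2.trans h3)
  have hdescent : ∃ n : ℕ, LinearMap.range ((A ^ (n + 1) : Z →L[ℂ] Z) : Z →ₗ[ℂ] Z) = LinearMap.range ((A ^ n : Z →L[ℂ] Z) : Z →ₗ[ℂ] Z) := by
    set G : ℕ → Submodule ℂ (Z ⧸ M) := fun k => Submodule.map M.mkQ (LinearMap.range ((A ^ k : Z →L[ℂ] Z) : Z →ₗ[ℂ] Z))
      with hG
    have hGanti : ∀ n, G (n + 1) ≤ G n :=
      fun n => Submodule.map_mono (range_pow_anti A (Nat.le_succ n))
    obtain ⟨n, hn⟩ := nat_anti_bdd (fun k => Module.finrank ℂ (G k))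
      (fun n => Submodule.finrank_mono (hGanti n))
    have hGeq : G (n + 1) = G n :=
      Submodule.eq_of_le_of_finrank_le (hGanti n) hn.ge
    refine ⟨n, ?_⟩
    have h1 := congrArg (Submodule.comap M.mkQ) hGeq
    rw [Submodule.comap_map_mkQ, Submodule.comap_map_mkQ] at h1
    rwa [sup_eq_right.mpr (hMle (n + 1)), sup_eq_right.mpr (hMle n)] at h1
  refine ⟨?_, ?_, hascent, hdescent⟩
  · -- ker A f.d.
    haveI := hD.1
    have hle : LinearMap.ker ((A : Z →L[ℂ] Z) : Z →ₗ[ℂ] Z) ≤ LinearMap.ker ((D : Z →L[ℂ] Z) : Z →ₗ[ℂ] Z) := by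
      intro x hx
      rw [LinearMap.mem_ker] at hx ⊢
      show (A * S) x = 0
      rw [ContinuousLinearMap.coe_coe] at hx
      rw [hc', ContinuousLinearMap.mul_apply, hx, map_zero]
    exact Submodule.finiteDimensional_of_le hle
  · -- coker A f.d.
    haveI := hD.2.1
    have hle : LinearMap.range ((D : Z →L[ℂ] Z) : Z →ₗ[ℂ] Z) ≤ LinearMap.range ((A : Z →L[ℂ] Z) : Z →ₗ[ℂ] Z) := by
      rintro x ⟨y, rfl⟩
      exact ⟨S y, by show (A * S) y = _; rw [ContinuousLinearMap.mul_apply]; rfl⟩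
    let π : (Z ⧸ LinearMap.range ((D : Z →L[ℂ] Z) : Z →ₗ[ℂ] Z)) →ₗ[ℂ] (Z ⧸ LinearMap.range ((A : Z →L[ℂ] Z) : Z →ₗ[ℂ] Z)) :=
      Submodule.mapQ _ _ LinearMap.id (by simpa using hle)
    have hsurj : Function.Surjective π := by
      intro y
      obtain ⟨x, rfl⟩ := Submodule.Quotient.mk_surjective _ y
      exact ⟨Submodule.Quotient.mk x, by rw [Submodule.mapQ_apply]; rfl⟩
    exact Module.Finite.of_surjective π hsurj

end PolyRieszHelpers

theorem polyRiesz_sigmaB_finite (T : X →L[ℂ] X)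
    (h : ∃ P : Polynomial ℂ, P ≠ 0 ∧ IsRiesz (Polynomial.aeval T P)) :
    (sigmaB T).Finite ∧ acc (sigmaB T) = ∅ := by
  obtain ⟨P, hP0, hR⟩ := h
  have hsub : sigmaB T ⊆ {z | P.IsRoot z} := by
    intro l hl
    by_contra hroot
    have hPl : P.eval l ≠ 0 := hroot
    obtain ⟨Q, hQ⟩ := Polynomial.dvd_iff_isRoot.mpr
      (show (P - Polynomial.C (P.eval l)).IsRoot l by simp [Polynomial.IsRoot])
    have hD : IsBrowder (Polynomial.aeval T P - P.eval l • 1) := by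
      by_contra hcon
      have hmem : P.eval l ∈ sigmaB (Polynomial.aeval T P) := hcon
      rw [hR] at hmem
      exact hPl hmem
    have h1 : Polynomial.aeval T (P - Polynomial.C (P.eval l))
        = Polynomial.aeval T P - P.eval l • 1 := by
      rw [map_sub, Polynomial.aeval_C, Algebra.algebraMap_eq_smul_one]
    have h2 : Polynomial.aeval T ((Polynomial.X - Polynomial.C l) * Q)
        = (T - l • 1) * Polynomial.aeval T Q := by
      rw [map_mul, map_sub, Polynomial.aeval_X, Polynomial.aeval_C,
        Algebra.algebraMap_eq_smul_one]
    have h3 : Polynomial.aeval T (Q * (Polynomial.X - Polynomial.C l))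
        = Polynomial.aeval T Q * (T - l • 1) := by
      rw [map_mul, map_sub, Polynomial.aeval_X, Polynomial.aeval_C,
        Algebra.algebraMap_eq_smul_one]
    have hfac : Polynomial.aeval T P - P.eval l • 1 = (T - l • 1) * Polynomial.aeval T Q := by
      rw [← h1, hQ, h2]
    have hcomm : (T - l • 1) * Polynomial.aeval T Q
        = Polynomial.aeval T Q * (T - l • 1) := by
      rw [← h2, ← h3, mul_comm]
    exact hl (browder_of_comm_factor _ _ hcomm (hfac ▸ hD))
  have hfin : (sigmaB T).Finite := (Polynomial.finite_setOf_isRoot hP0).subset hsub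
  refine ⟨hfin, ?_⟩
  ext z
  simp only [acc, mem_setOf_eq, mem_empty_iff_false, iff_false]
  intro hz
  rw [accPt_principal_iff_clusterPt] at hz
  have hcl : z ∈ closure (sigmaB T \ {z}) := mem_closure_iff_clusterPt.mpr hz
  rw [((hfin.diff : (sigmaB T \ {z}).Finite).isClosed).closure_eq] at hcl
  exact hcl.2 rfl
end
end
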